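/- arXiv:1307.2808 — 4 statements merged into one kernel-verified Lean document; each statement's English description precedes it below -/
import Mathlib

section
/- Let n ≥ 1, let 0 = c_0 ≤ c_1 ≤ ⋯ ≤ c_n be real numbers, let z_0 ≤ z_1 ≤ ⋯ ≤ z_n be a nondecreasing sequence in [0,1], let α ∈ (0,1), and suppose there exists t with z_t ≥ α; let t* be the smallest such index. Then c_{t*} ≤ (1/(1−α)) · ∑_{t=0}^{n−1} (1 − z_t)(c_{t+1} − c_t). -/
open Finset

/-! Telescoping writes `c_{t*}` as the sum of the increments `c_{t+1} - c_t` over `t < t*`.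
Each of these is nonnegative and carries weight `1 - z_t > 1 - α` by minimality of `t*`, and the
remaining terms of the sum are nonnegative because `z_t ≤ 1`. -/

theorem mul_sub_le_sum_mul_sub_of_le {c w : ℕ → ℝ} {a : ℝ} {m : ℕ}
    (hc : ∀ t < m, c t ≤ c (t + 1)) (hw : ∀ t < m, a ≤ w t) :
    a * (c m - c 0) ≤ ∑ t ∈ range m, w t * (c (t + 1) - c t) := by
  rw [← sum_range_sub, mul_sum]
  refine sum_le_sum fun t ht => ?_
  rw [mem_range] at ht
  exact mul_le_mul_of_nonneg_right (hw t ht) (sub_nonneg.mpr (hc t ht))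

theorem cjt_bound_general (n : ℕ) (c z : ℕ → ℝ)
    (hc0 : c 0 = 0) (hcmono : ∀ t : ℕ, t < n → c t ≤ c (t + 1))
    (hz01 : ∀ t : ℕ, t ≤ n → 0 ≤ z t ∧ z t ≤ 1)
    (α : ℝ) (hα1 : α < 1)
    (tstar : ℕ) (htn : tstar ≤ n)
    (htmin : ∀ t : ℕ, t < tstar → z t < α) :
    c tstar ≤ (1 / (1 - α)) * ∑ t ∈ Finset.range n, (1 - z t) * (c (t + 1) - c t) := by
  have key : (1 - α) * c tstar ≤ ∑ t ∈ range n, (1 - z t) * (c (t + 1) - c t) :=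
    calc (1 - α) * c tstar = (1 - α) * (c tstar - c 0) := by rw [hc0, sub_zero]
      _ ≤ ∑ t ∈ range tstar, (1 - z t) * (c (t + 1) - c t) :=
        mul_sub_le_sum_mul_sub_of_le (fun t ht => hcmono t (ht.trans_le htn))
          (fun t ht => by linarith [htmin t ht])
      _ ≤ ∑ t ∈ range n, (1 - z t) * (c (t + 1) - c t) := by
        refine sum_le_sum_of_subset_of_nonneg (range_subset_range.mpr htn) fun t ht _ => ?_
        rw [mem_range] at ht
        exact mul_nonneg (sub_nonneg.mpr (hz01 t ht.le).2) (sub_nonneg.mpr (hcmono t ht))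
  rwa [one_div, inv_mul_eq_div, le_div_iff₀ (sub_pos.mpr hα1), mul_comm]

/-- Lemma `lm:cjt` of the paper: given nondecreasing `0 = c_0 ≤ c_1 ≤ ⋯ ≤ c_n`, a
nondecreasing sequence `z_0 ≤ ⋯ ≤ z_n` in `[0,1]`, `α ∈ (0,1)`, and `t*` the smallest index
with `z_{t*} ≥ α`, we have `c_{t*} ≤ (1/(1-α)) ∑_{t=0}^{n-1} (1-z_t)(c_{t+1} - c_t)`. -/
theorem cjt_bound (n : ℕ) (hn : 1 ≤ n) (c z : ℕ → ℝ)
    (hc0 : c 0 = 0) (hcmono : ∀ t : ℕ, t < n → c t ≤ c (t + 1))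
    (hz01 : ∀ t : ℕ, t ≤ n → 0 ≤ z t ∧ z t ≤ 1)
    (hzmono : ∀ t : ℕ, t < n → z t ≤ z (t + 1))
    (α : ℝ) (hα0 : 0 < α) (hα1 : α < 1)
    (tstar : ℕ) (htn : tstar ≤ n) (htge : α ≤ z tstar)
    (htmin : ∀ t : ℕ, t < tstar → z t < α) :
    c tstar ≤ (1 / (1 - α)) * ∑ t ∈ Finset.range n, (1 - z t) * (c (t + 1) - c t) :=
  cjt_bound_general n c z hc0 hcmono hz01 α hα1 tstar htn htmin
end

section
/- Let N be a finite set, r a positive integer, α ∈ (0,1], and let x, y : N → [0,1] satisfy x_i ≤ y_i for every i ∈ N and the knapsack-cover inequalities ∑_{i∈N∖A} x_i ≥ α·(r − |A|) for every subset A ⊆ N. Define ỹ_i = 1 if y_i ≥ α and ỹ_i = y_i/α otherwise. Then ∑_{i∈N} ỹ_i ≥ r. -/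
/-!
Apply the knapsack-cover inequality to the set `A` of indices with `α ≤ y i`: each of them
contributes `1`, and the others contribute `(∑_{N∖A} y) / α ≥ (∑_{N∖A} x) / α ≥ r - |A|`.
-/

open Finset

theorem sum_ite_one_div_eq {ι : Type*} [DecidableEq ι] (N : Finset ι) (p : ι → Prop)
    [DecidablePred p] (f : ι → ℝ) (α : ℝ) :
    ∑ i ∈ N, (if p i then (1 : ℝ) else f i / α) =
      #(N.filter p) + (∑ i ∈ N \ N.filter p, f i) / α := by
  rw [sum_ite, sum_const, nsmul_one, filter_not, sum_div]

theorem scaled_openings_cover_general {ι : Type*} [DecidableEq ι]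
    (N : Finset ι) (r : ℕ)
    (α : ℝ) (hα0 : 0 < α)
    (x y : ι → ℝ)
    (hxy : ∀ i ∈ N, x i ≤ y i)
    (hkc : ∀ A ⊆ N, α * ((r : ℝ) - (A.card : ℝ)) ≤ ∑ i ∈ N \ A, x i) :
    (r : ℝ) ≤ ∑ i ∈ N, (if α ≤ y i then (1 : ℝ) else y i / α) := by
  set A := N.filter (fun i => α ≤ y i)
  have hx_le_y : ∑ i ∈ N \ A, x i ≤ ∑ i ∈ N \ A, y i :=
    sum_le_sum fun i hi => hxy i (mem_sdiff.mp hi).1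
  have hrest : (r : ℝ) - #A ≤ (∑ i ∈ N \ A, y i) / α := by
    rw [le_div_iff₀ hα0]
    linarith [hkc A (filter_subset _ _)]
  rw [sum_ite_one_div_eq]
  linarith

/-- The scaled openings cover the requirement: if `x ≤ y` pointwise on `N` and the
knapsack-cover inequalities `∑_{i∈N∖A} x_i ≥ α (r - |A|)` hold for all `A ⊆ N`, then the
scaled vector `ỹ_i = 1` (if `y_i ≥ α`) or `y_i/α` (otherwise) satisfies `∑_{i∈N} ỹ_i ≥ r`. -/
theorem scaled_openings_cover {ι : Type*} [DecidableEq ι]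
    (N : Finset ι) (r : ℕ) (hr : 0 < r)
    (α : ℝ) (hα0 : 0 < α) (hα1 : α ≤ 1)
    (x y : ι → ℝ)
    (hx : ∀ i ∈ N, 0 ≤ x i ∧ x i ≤ 1) (hy : ∀ i ∈ N, 0 ≤ y i ∧ y i ≤ 1)
    (hxy : ∀ i ∈ N, x i ≤ y i)
    (hkc : ∀ A ⊆ N, α * ((r : ℝ) - (A.card : ℝ)) ≤ ∑ i ∈ N \ A, x i) :
    (r : ℝ) ≤ ∑ i ∈ N, (if α ≤ y i then (1 : ℝ) else y i / α) :=
  scaled_openings_cover_general N r α hα0 x y hxy hkc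
end

section
/- Let (X,d) be a metric space, F ⊆ X a finite set of facilities with opening costs f_i ≥ 0, and C a finite set of clients, each client j ∈ C having a point of X, a requirement r_j ∈ ℕ₊, and a radius c_j ≥ 0. Let ỹ : F → [0,1] satisfy ∑_{i∈F : d(i,j) ≤ c_j} ỹ_i ≥ r_j for every client j. Then there exists a set S ⊆ F such that (1) ∑_{i∈S} f_i ≤ ∑_{i∈F} f_i·ỹ_i, and (2) for every client j, |{i ∈ S : d(i,j) ≤ 3·c_j}| ≥ r_j. -/
/-!
Serve the clients in order of increasing radius. A client `j` still requiring `k` facilities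
has fractional mass at least `k` in its ball `A`; open the `k` cheapest facilities `O` of `A` and
pay for them with a fractional selection of mass exactly `k`: all of `ỹ` on `O` plus a fraction
`θ` of `ỹ` on `A \ O`, which is then removed from `ỹ` (the rest of `A` keeps `(1 - θ) ỹ`).
A later client `j'` whose ball meets `A` has `c_j ≤ c_j'`, so the triangle inequality puts all of
`A` within `3 c_j'` of `j'`: it loses at most `k` fractional mass and gains the `k` facilities
of `O`. Clients whose balls miss `A` are unaffected.
-/

open Finset

section Rounding

variable {α : Type*}

theorem exists_subset_card_eq_forall_le [DecidableEq α] {β : Type*} [LinearOrder β] (f : α → β)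
    {A : Finset α} {k : ℕ} (hk : k ≤ #A) : ∃ O ⊆ A, #O = k ∧ ∀ i ∈ O, ∀ i' ∈ A \ O, f i ≤ f i' := by
  induction k with
  | zero => exact ⟨∅, empty_subset A, card_empty, by simp⟩
  | succ k ih =>
    obtain ⟨O, hOA, hO, hcheap⟩ := ih (by omega)
    have hrest : (A \ O).Nonempty := by
      rw [← card_pos, card_sdiff_of_subset hOA]; omega
    obtain ⟨i₀, hi₀, hmin⟩ := exists_min_image (A \ O) f hrest
    refine ⟨insert i₀ O, insert_subset (mem_sdiff.1 hi₀).1 hOA, ?_, ?_⟩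
    · rw [card_insert_of_notMem (mem_sdiff.1 hi₀).2, hO]
    · intro i hi i' hi'
      have hi'O : i' ∈ A \ O := sdiff_subset_sdiff subset_rfl (subset_insert i₀ O) hi'
      rcases mem_insert.1 hi with rfl | hiO
      exacts [hmin i' hi'O, hcheap i hiO i' hi'O]

/-- Whole units of the cheapest items cost no more than a fractional purchase of the same total
amount: `y` on the cheap items `O` and `θ * y` on the dearer items `T`. -/
theorem sum_le_sum_mul_add_mul_sum {O T : Finset α} {f y : α → ℝ} {θ : ℝ}
    (hcheap : ∀ i ∈ O, ∀ i' ∈ T, f i ≤ f i') (hf : ∀ i ∈ T, 0 ≤ f i)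
    (hyO : ∀ i ∈ O, y i ≤ 1) (hyT : ∀ i ∈ T, 0 ≤ y i) (hθ : 0 ≤ θ)
    (hmass : ∑ i ∈ O, y i + θ * ∑ i ∈ T, y i = #O) :
    ∑ i ∈ O, f i ≤ ∑ i ∈ O, f i * y i + θ * ∑ i ∈ T, f i * y i := by
  obtain ⟨M, hOM, hMT⟩ : ∃ M, (∀ i ∈ O, f i ≤ M) ∧ ∀ i ∈ T, M ≤ f i := by
    rcases O.eq_empty_or_nonempty with rfl | hO
    · exact ⟨0, by simp, hf⟩
    · exact ⟨O.sup' hO f, fun i hi => le_sup' f hi,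
        fun i' hi' => (sup'_le_iff hO f).2 fun i hi => hcheap i hi i' hi'⟩
  have hslack : ∑ i ∈ O, (1 - y i) = θ * ∑ i ∈ T, y i := by
    rw [sum_sub_distrib, sum_const, nsmul_one]; linarith
  calc ∑ i ∈ O, f i = ∑ i ∈ O, f i * y i + ∑ i ∈ O, f i * (1 - y i) := by
        rw [← sum_add_distrib]; exact sum_congr rfl fun i _ => by ring
    _ ≤ ∑ i ∈ O, f i * y i + ∑ i ∈ O, M * (1 - y i) := by
        gcongr with i hi
        · linarith [hyO i hi]
        · exact hOM i hi
    _ = ∑ i ∈ O, f i * y i + θ * ∑ i ∈ T, M * y i := by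
        rw [← mul_sum, hslack, ← mul_sum]; ring
    _ ≤ ∑ i ∈ O, f i * y i + θ * ∑ i ∈ T, f i * y i := by
        gcongr with i hi
        · exact hyT i hi
        · exact hMT i hi

theorem exists_mem_Icc_mul_eq {a s : ℝ} (ha : 0 ≤ a) (has : a ≤ s) :
    ∃ θ ∈ Set.Icc (0 : ℝ) 1, θ * s = a := by
  rcases (ha.trans has).eq_or_lt with rfl | hs
  · exact ⟨0, by simp, by linarith⟩
  · exact ⟨a / s, ⟨div_nonneg ha hs.le, (div_le_one hs).2 has⟩, div_mul_cancel₀ a hs.ne'⟩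

theorem exists_subset_card_eq_sum_le [DecidableEq α] {A : Finset α} {f y : α → ℝ} {k : ℕ}
    (hf : ∀ i ∈ A, 0 ≤ f i) (hy : ∀ i ∈ A, 0 ≤ y i ∧ y i ≤ 1) (hk : (k : ℝ) ≤ ∑ i ∈ A, y i) :
    ∃ O ⊆ A, #O = k ∧ ∃ θ ∈ Set.Icc (0 : ℝ) 1,
      ∑ i ∈ O, y i + θ * ∑ i ∈ A \ O, y i = k ∧
      ∑ i ∈ O, f i ≤ ∑ i ∈ O, f i * y i + θ * ∑ i ∈ A \ O, f i * y i := by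
  have hkA : k ≤ #A := by
    have : ∑ i ∈ A, y i ≤ #A := by
      simpa using sum_le_card_nsmul A y 1 fun i hi => (hy i hi).2
    exact_mod_cast hk.trans this
  obtain ⟨O, hOA, hO, hcheap⟩ := exists_subset_card_eq_forall_le f hkA
  have hyO : ∑ i ∈ O, y i ≤ k := by
    simpa [hO] using sum_le_card_nsmul O y 1 fun i hi => (hy i (hOA hi)).2
  have hsplit : ∑ i ∈ A \ O, y i + ∑ i ∈ O, y i = ∑ i ∈ A, y i := sum_sdiff hOA
  obtain ⟨θ, hθ, hθmass⟩ := exists_mem_Icc_mul_eq (a := k - ∑ i ∈ O, y i)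
    (s := ∑ i ∈ A \ O, y i) (by linarith) (by linarith)
  have hmass : ∑ i ∈ O, y i + θ * ∑ i ∈ A \ O, y i = k := by linarith
  refine ⟨O, hOA, hO, θ, hθ, hmass, sum_le_sum_mul_add_mul_sum hcheap
    (fun i hi => hf i (sdiff_subset hi)) (fun i hi => (hy i (hOA hi)).2)
    (fun i hi => (hy i (sdiff_subset hi)).1) hθ.1 (by rw [hmass, hO])⟩

theorem sum_mul_piecewise_add [DecidableEq α] (A s : Finset α) (g y : α → ℝ) (θ : ℝ) :
    ∑ i ∈ s, g i * A.piecewise (fun i => (1 - θ) * y i) y i + θ * ∑ i ∈ s ∩ A, g i * y i =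
      ∑ i ∈ s, g i * y i := by
  have hin : ∑ i ∈ s ∩ A, g i * A.piecewise (fun i => (1 - θ) * y i) y i =
      (1 - θ) * ∑ i ∈ s ∩ A, g i * y i := by
    rw [mul_sum]
    exact sum_congr rfl fun i hi => by rw [piecewise_eq_of_mem _ _ _ (mem_inter.1 hi).2]; ring
  have hout : ∑ i ∈ s \ A, g i * A.piecewise (fun i => (1 - θ) * y i) y i =
      ∑ i ∈ s \ A, g i * y i :=
    sum_congr rfl fun i hi => by rw [piecewise_eq_of_notMem _ _ _ (mem_sdiff.1 hi).2]
  rw [← sum_inter_add_sum_sdiff s A, hin, hout,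
    ← sum_inter_add_sum_sdiff s A (fun i => g i * y i)]
  ring

theorem sum_filter_le_sum_filter_piecewise_add_card [DecidableEq α] {F A O : Finset α}
    {y : α → ℝ} {θ : ℝ} (p q : α → Prop) [DecidablePred p] [DecidablePred q] (hOA : O ⊆ A)
    (hy : ∀ i ∈ A, 0 ≤ y i) (hθ : 0 ≤ θ)
    (hmass : ∑ i ∈ O, y i + θ * ∑ i ∈ A \ O, y i = #O)
    (hA : (∀ i ∈ A, ¬ p i) ∨ ∀ i ∈ A, q i) :
    ∑ i ∈ F with p i, y i ≤
      ∑ i ∈ F \ O with p i, A.piecewise (fun i => (1 - θ) * y i) y i + #{i ∈ O | q i} := by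
  set B := {i ∈ F | p i}
  have hBO : {i ∈ F \ O | p i} = B \ O := by ext; simp only [mem_filter, mem_sdiff, B]; tauto
  have hsplit := sum_inter_add_sum_sdiff B O y
  have hscale := sum_mul_piecewise_add A (B \ O) (fun _ => 1) y θ
  simp only [one_mul] at hscale
  rw [hBO, ← hsplit, ← hscale]
  rcases hA with hfar | hnear
  · have hBA : ∀ i ∈ B, i ∉ A := fun i hi hiA => hfar i hiA (mem_filter.1 hi).2
    have hBO₀ : B ∩ O = ∅ := eq_empty_of_forall_notMem fun i hi =>
      hBA i (mem_inter.1 hi).1 (hOA (mem_inter.1 hi).2)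
    have hBA₀ : B \ O ∩ A = ∅ := eq_empty_of_forall_notMem fun i hi =>
      hBA i (mem_sdiff.1 (mem_inter.1 hi).1).1 (mem_inter.1 hi).2
    simp [hBO₀, hBA₀]
  · have hOq : #{i ∈ O | q i} = #O := by rw [filter_true_of_mem fun i hi => hnear i (hOA hi)]
    have h₁ : ∑ i ∈ B ∩ O, y i ≤ ∑ i ∈ O, y i :=
      sum_le_sum_of_subset_of_nonneg inter_subset_right fun i hi _ => hy i (hOA hi)
    have h₂ : ∑ i ∈ B \ O ∩ A, y i ≤ ∑ i ∈ A \ O, y i :=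
      sum_le_sum_of_subset_of_nonneg (by intro i; simp only [mem_inter, mem_sdiff]; tauto)
        fun i hi _ => hy i (sdiff_subset hi)
    rw [hOq]
    linarith [mul_le_mul_of_nonneg_left h₂ hθ]

theorem natCast_tsub_le_of_le_add {a b : ℕ} {x : ℝ} (hx : 0 ≤ x) (h : (a : ℝ) ≤ x + b) :
    ((a - b : ℕ) : ℝ) ≤ x := by
  rcases le_total b a with hba | hab
  · rw [Nat.cast_sub hba]; linarith
  · rw [Nat.sub_eq_zero_of_le hab, Nat.cast_zero]; exact hx

end Rounding

section Metric

variable {X : Type*} [PseudoMetricSpace X]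

theorem forall_lt_dist_or_forall_dist_le_three_mul (F : Finset X) (c : X → ℝ) {j j' : X}
    (hc : c j ≤ c j') :
    (∀ i ∈ {i ∈ F | dist i j ≤ c j}, ¬ dist i j' ≤ c j') ∨
      ∀ i ∈ {i ∈ F | dist i j ≤ c j}, dist i j' ≤ 3 * c j' := by
  refine or_iff_not_imp_left.2 fun h => ?_
  push Not at h
  obtain ⟨i₀, hi₀, hi₀j'⟩ := h
  intro i hi
  have hij := (mem_filter.1 hi).2
  have hi₀j := (mem_filter.1 hi₀).2
  calc dist i j' ≤ dist i j + dist j i₀ + dist i₀ j' := dist_triangle4 _ _ _ _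
    _ ≤ 3 * c j' := by rw [dist_comm j i₀]; linarith

variable [DecidableEq X]

theorem exists_rounding_step {F : Finset X} {f y c : X → ℝ} {k : ℕ} {j : X}
    (hf : ∀ i ∈ F, 0 ≤ f i) (hy : ∀ i ∈ F, 0 ≤ y i ∧ y i ≤ 1)
    (hk : (k : ℝ) ≤ ∑ i ∈ F with dist i j ≤ c j, y i) :
    ∃ O ⊆ F, ∃ y' : X → ℝ, (∀ i ∈ F \ O, 0 ≤ y' i ∧ y' i ≤ 1) ∧
      ∑ i ∈ O, f i + ∑ i ∈ F \ O, f i * y' i ≤ ∑ i ∈ F, f i * y i ∧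
      k ≤ #{i ∈ O | dist i j ≤ 3 * c j} ∧
      ∀ j', c j ≤ c j' → ∑ i ∈ F with dist i j' ≤ c j', y i ≤
        ∑ i ∈ F \ O with dist i j' ≤ c j', y' i + #{i ∈ O | dist i j' ≤ 3 * c j'} := by
  set A := {i ∈ F | dist i j ≤ c j}
  have hAF : A ⊆ F := filter_subset _ _
  obtain ⟨O, hOA, hO, θ, hθ, hmass, hcost⟩ :=
    exists_subset_card_eq_sum_le (fun i hi => hf i (hAF hi)) (fun i hi => hy i (hAF hi)) hk
  refine ⟨O, hOA.trans hAF, A.piecewise (fun i => (1 - θ) * y i) y, ?_, ?_, ?_, ?_⟩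
  · intro i hi
    have hyi := hy i (sdiff_subset hi)
    by_cases hiA : i ∈ A
    · rw [piecewise_eq_of_mem _ _ _ hiA]
      exact ⟨mul_nonneg (by linarith [hθ.2]) hyi.1, mul_le_one₀ (by linarith [hθ.1]) hyi.1 hyi.2⟩
    · rwa [piecewise_eq_of_notMem _ _ _ hiA]
  · have hscale := sum_mul_piecewise_add A (F \ O) f y θ
    have hFOA : F \ O ∩ A = A \ O := by
      ext i; simp only [mem_inter, mem_sdiff, mem_filter, A]; tauto
    rw [hFOA] at hscale
    have hsplit := sum_sdiff (f := fun i => f i * y i) (hOA.trans hAF)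
    linarith
  · rw [filter_true_of_mem fun i hi => ?_, hO]
    have hij := (mem_filter.1 (hOA hi)).2
    linarith [dist_nonneg (x := i) (y := j)]
  · intro j' hc
    exact sum_filter_le_sum_filter_piecewise_add_card _ _ hOA (fun i hi => (hy i (hAF hi)).1)
      hθ.1 (by rw [hmass, hO]) (forall_lt_dist_or_forall_dist_le_three_mul F c hc)

theorem exists_subset_sum_le_and_le_card_filter (f c : X → ℝ) (C : Finset X) {F : Finset X}
    {r : X → ℕ} {y : X → ℝ} (hf : ∀ i ∈ F, 0 ≤ f i) (hy : ∀ i ∈ F, 0 ≤ y i ∧ y i ≤ 1)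
    (hcov : ∀ j ∈ C, (r j : ℝ) ≤ ∑ i ∈ F with dist i j ≤ c j, y i) :
    ∃ S ⊆ F, ∑ i ∈ S, f i ≤ ∑ i ∈ F, f i * y i ∧
      ∀ j ∈ C, r j ≤ #{i ∈ S | dist i j ≤ 3 * c j} := by
  induction C using Finset.strongInduction generalizing F r y with
  | H C ih =>
    rcases C.eq_empty_or_nonempty with rfl | hC
    · exact ⟨∅, empty_subset F,
        by simpa using sum_nonneg fun i hi => mul_nonneg (hf i hi) (hy i hi).1, by simp⟩
    obtain ⟨j, hj, hmin⟩ := exists_min_image C c hC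
    obtain ⟨O, hOF, y', hy', hcost, hcovj, hcov'⟩ := exists_rounding_step hf hy (hcov j hj)
    obtain ⟨S', hS'F, hS'cost, hS'cov⟩ := ih (C.erase j) (erase_ssubset hj)
      (F := F \ O) (r := fun j' => r j' - #{i ∈ O | dist i j' ≤ 3 * c j'}) (y := y')
      (fun i hi => hf i (sdiff_subset hi)) hy' fun j' hj' =>
        natCast_tsub_le_of_le_add (sum_nonneg fun i hi => (hy' i (mem_filter.1 hi).1).1)
          ((hcov j' (mem_of_mem_erase hj')).trans (hcov' j' (hmin j' (mem_of_mem_erase hj'))))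
    have hdisj : Disjoint O S' := disjoint_of_subset_right hS'F disjoint_sdiff
    refine ⟨O ∪ S', union_subset hOF (hS'F.trans sdiff_subset), ?_, fun j' hj' => ?_⟩
    · rw [sum_union hdisj]; linarith
    · rw [filter_union, card_union_of_disjoint (disjoint_filter_filter hdisj)]
      rcases eq_or_ne j' j with rfl | hne
      · exact hcovj.trans (Nat.le_add_right _ _)
      · have := hS'cov j' (mem_erase.2 ⟨hne, hj'⟩)
        omega

end Metric

theorem ftfl_clustered_rounding_general {X : Type*} [MetricSpace X]
    (F : Finset X) (f : X → ℝ) (hf : ∀ i ∈ F, 0 ≤ f i)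
    (C : Finset X) (r : X → ℕ)
    (c : X → ℝ)
    (ty : X → ℝ) (hty : ∀ i ∈ F, 0 ≤ ty i ∧ ty i ≤ 1)
    (hcov : ∀ j ∈ C, (r j : ℝ) ≤ ∑ i ∈ F.filter (fun i => dist i j ≤ c j), ty i) :
    ∃ S ⊆ F, (∑ i ∈ S, f i ≤ ∑ i ∈ F, f i * ty i) ∧
      (∀ j ∈ C, r j ≤ (S.filter (fun i => dist i j ≤ 3 * c j)).card) := by
  classical
  exact exists_subset_sum_le_and_le_card_filter f c C hf hty hcov

/-- Lemma `lm:rounding` of the paper (clustered rounding for fault-tolerant facility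
location): if `ỹ : F → [0,1]` fractionally opens at least `r_j` volume within distance `c_j`
of every client `j`, then there is a set `S ⊆ F` of facilities with total opening cost at
most `∑_i f_i ỹ_i` such that every client `j` has at least `r_j` open facilities within
distance `3 c_j`. -/
theorem ftfl_clustered_rounding {X : Type*} [MetricSpace X]
    (F : Finset X) (f : X → ℝ) (hf : ∀ i ∈ F, 0 ≤ f i)
    (C : Finset X) (r : X → ℕ) (hr : ∀ j ∈ C, 0 < r j)
    (c : X → ℝ) (hc : ∀ j ∈ C, 0 ≤ c j)
    (ty : X → ℝ) (hty : ∀ i ∈ F, 0 ≤ ty i ∧ ty i ≤ 1)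
    (hcov : ∀ j ∈ C, (r j : ℝ) ≤ ∑ i ∈ F.filter (fun i => dist i j ≤ c j), ty i) :
    ∃ S ⊆ F, (∑ i ∈ S, f i ≤ ∑ i ∈ F, f i * ty i) ∧
      (∀ j ∈ C, r j ≤ (S.filter (fun i => dist i j ≤ 3 * c j)).card) :=
  ftfl_clustered_rounding_general F f hf C r c ty hty hcov
end

section
/- The natural LP relaxation of FTFL (without knapsack-cover constraints) has integrality gap Ω(n): for every integer n ≥ 1, consider the instance on the real line with n facilities, where facilities i_1,…,i_{n−1} are at coordinate 0 and facility i_n is at coordinate n, all opening costs are 0, and there is a single client j at coordinate 0 with requirement r_j = n and weight w_j = 1. Then every feasible integral solution has cost at least n, while the natural LP relaxation admits a feasible fractional solution of objective value at most 1 (namely y_i = 1 and x_{ij} = 1 for all i, and z_{jt} = t/n). -/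
open scoped BigOperators

/-- Locations of the `n` facilities of the gap instance: facilities `i_1, …, i_{n-1}` at
coordinate `0` and facility `i_n` at coordinate `n`.  The single client sits at `0`. -/
noncomputable def gapLoc (n : ℕ) (i : Fin n) : ℝ := if (i : ℕ) < n - 1 then 0 else n

/-- `c_t`: the distance from the client (at `0`) to its `t`-th closest facility
(`c_0 = 0`); here `c_t = 0` for `t < n` and `c_n = n`. -/
noncomputable def gapC (n t : ℕ) : ℝ := if t < n then 0 else n

/-!
Any `n` open facilities must include the one at distance `n`, so the client's `n`-th closest
open facility costs `n`. Fractionally, `z_t = t / n` meets every prefix constraint with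
equality, and the objective only pays the single jump `c_n - c_{n-1} = n`, with weight
`1 - (n - 1) / n = 1 / n`.
-/

theorem Multiset.le_sort_getD_card_sub_one {α : Type*} [LinearOrder α] {m : Multiset α} {a : α}
    (ha : a ∈ m) (d : α) : a ≤ (m.sort (· ≤ ·)).getD (Multiset.card m - 1) d := by
  have ha' : a ∈ m.sort (· ≤ ·) := (Multiset.mem_sort _).mpr ha
  rw [← Multiset.length_sort (· ≤ ·),
    List.getD_eq_getElem _ _ (Nat.sub_one_lt (List.length_pos_of_mem ha').ne'),
    ← List.getLast_eq_getElem]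
  exact (Multiset.pairwise_sort m _).rel_getLast ha'

theorem dist_gapLoc_last {n : ℕ} (hn : 1 ≤ n) :
    dist (gapLoc n ⟨n - 1, Nat.sub_one_lt_of_le hn le_rfl⟩) 0 = n := by
  simp [gapLoc]

theorem gap_integral_cost_ge {n : ℕ} (hn : 1 ≤ n) (S : Finset (Fin n)) (hS : n ≤ S.card) :
    (n : ℝ) ≤ ((S.val.map fun i => dist (gapLoc n i) (0 : ℝ)).sort (· ≤ ·)).getD (n - 1) 0 := by
  have hS_univ : S = Finset.univ :=
    S.eq_univ_of_card (le_antisymm (Finset.card_le_univ S) (by simpa using hS))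
  set m := S.val.map fun i => dist (gapLoc n i) (0 : ℝ)
  have hcard : Multiset.card m = n := by simp [m, hS_univ]
  have hmem : (n : ℝ) ∈ m := by
    rw [← dist_gapLoc_last hn]
    exact Multiset.mem_map_of_mem _ (by simp [hS_univ])
  simpa [hcard] using m.le_sort_getD_card_sub_one hmem 0

theorem gapC_succ_sub_gapC {n t : ℕ} (ht : t < n) :
    gapC n (t + 1) - gapC n t = if t = n - 1 then (n : ℝ) else 0 := by
  unfold gapC
  split_ifs <;> first | omega | simp

theorem gap_lp_objective {n : ℕ} (hn : 1 ≤ n) :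
    ∑ t ∈ Finset.range n, (1 - (t : ℝ) / n) * (gapC n (t + 1) - gapC n t) = 1 := by
  have hn' : (n : ℝ) ≠ 0 := by positivity
  rw [Finset.sum_congr rfl fun t ht => by rw [gapC_succ_sub_gapC (Finset.mem_range.mp ht)]]
  simp only [mul_ite, mul_zero, Finset.sum_ite_eq', Finset.mem_range,
    Nat.sub_one_lt_of_le hn le_rfl, if_true, Nat.cast_sub hn, Nat.cast_one]
  field_simp
  ring

/-- The natural LP relaxation of FTFL (without knapsack-cover constraints) has integrality
gap `Ω(n)`: on the line instance with `n - 1` facilities at `0`, one facility at `n`, all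
opening costs `0`, and a single client at `0` with requirement `n` and weight `1`, every
feasible integral solution has cost at least `n`, while the natural LP admits a feasible
fractional solution of objective value at most `1` (namely `y_i = 1`, `x_{ij} = 1`,
`z_{jt} = t/n`). -/
theorem ftfl_natural_lp_gap (n : ℕ) (hn : 1 ≤ n) :
    (∀ S : Finset (Fin n), n ≤ S.card →
      (n : ℝ) ≤ (∑ i ∈ S, (0 : ℝ)) +
        1 * (((S.val.map fun i => dist (gapLoc n i) (0 : ℝ)).sort (· ≤ ·)).getD (n - 1) 0)) ∧
    (∃ (y x : Fin n → ℝ) (z : ℕ → ℝ),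
      (∀ i : Fin n, y i = 1) ∧ (∀ i : Fin n, x i = 1) ∧ (∀ t : ℕ, z t = (t : ℝ) / n) ∧
      (∀ i : Fin n, 0 ≤ y i ∧ y i ≤ 1) ∧ (∀ i : Fin n, 0 ≤ x i ∧ x i ≤ 1) ∧
      (∀ t : ℕ, t ≤ n → 0 ≤ z t ∧ z t ≤ 1) ∧
      ((n : ℝ) ≤ ∑ i : Fin n, x i) ∧ (∀ i : Fin n, x i ≤ y i) ∧
      (∀ t : ℕ, 1 ≤ t → t ≤ n →
        (n : ℝ) * z t ≤ ∑ i ∈ Finset.univ.filter (fun i : Fin n => (i : ℕ) < t), x i) ∧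
      (∑ i : Fin n, (0 : ℝ) * y i) +
        1 * (∑ t ∈ Finset.range n, (1 - z t) * (gapC n (t + 1) - gapC n t)) ≤ 1) := by
  have hn_pos : (0 : ℝ) < n := by exact_mod_cast hn
  refine ⟨fun S hS => by simpa using gap_integral_cost_ge hn S hS, fun _ => 1, fun _ => 1,
    fun t => (t : ℝ) / n, fun _ => rfl, fun _ => rfl, fun _ => rfl,
    fun _ => ⟨zero_le_one, le_rfl⟩, fun _ => ⟨zero_le_one, le_rfl⟩, ?_, by simp,
    fun _ => le_rfl, ?_, by simpa using (gap_lp_objective hn).le⟩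
  · intro t ht
    exact ⟨by positivity, div_le_one_of_le₀ (by exact_mod_cast ht) hn_pos.le⟩
  · intro t _ ht
    rw [mul_div_cancel₀ _ hn_pos.ne', Finset.sum_const, Fin.card_filter_val_lt, min_eq_right ht]
    simp
end
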